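/- arXiv:2402.05838 — 7 statements merged into one kernel-verified Lean document; each statement's English description precedes it below -/
import Mathlib

section
/- For every word u ∈ A*, every integer k ≥ 0 and all letters a_1,…,a_k ∈ A, one has binom_q(u, a_1⋯a_k) = Σ q^{Σ_{i=1}^k i·|u_i|}, where the outer sum ranges over all factorizations u = u_0 a_1 u_1 a_2 ⋯ u_{k-1} a_k u_k with u_0, u_1, …, u_k ∈ A*. -/
noncomputable def qbinAux {A : Type*} [DecidableEq A] : List A → List A → Polynomial ℕ
  | _, [] => 1
  | [], _ :: _ => 0
  | a :: u, b :: v =>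
      Polynomial.X ^ (v.length + 1) * qbinAux u (b :: v) +
        (if a = b then qbinAux u v else 0)

/-- The `q`-binomial coefficient `binom_q(u,v)` of two words. -/
noncomputable def qbin {A : Type*} [DecidableEq A] (u v : List A) : Polynomial ℕ :=
  qbinAux u.reverse v.reverse

/-- `glue [u₀, u₁, …, u_k] [a₁, …, a_k] = u₀ a₁ u₁ a₂ ⋯ u_{k-1} a_k u_k`,
the word obtained by interleaving the blocks `uᵢ` with the letters `aᵢ`. -/
def glue {A : Type*} : List (List A) → List A → List A
  | [], as => as
  | u0 :: us, [] => u0 ++ glue us []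
  | u0 :: us, a :: as => u0 ++ a :: glue us as

/-- The weight `Σ_{i} i·|uᵢ|` of a factorization `[u₀, u₁, …, u_k]`. -/
def qweight {A : Type*} (us : List (List A)) : ℕ :=
  ∑ i ∈ Finset.range us.length, i * (us.getD i []).length

/-!
The defining recursion of `binom_q` peels off the *last* letters of `u` and `v`; an induction on
`u` turns it into a recursion on the *first* letters,
`binom_q(a u, b v) = binom_q(u, b v) + δ_{a,b} q^{|u| - |v|} binom_q(u, v)`,
and the sum over factorizations satisfies the same recursion: either the first block `u₀` of a
factorization of `a u` is nonempty, and dropping its first letter leaves the weight unchanged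
(block `u₀` has weight `0`), or `u₀` is empty, `a = b`, and dropping `u₀` and `a₁` shifts every
remaining index down by one, lowering the weight by `|u₁| + ⋯ + |u_k| = |u| - |v|`.
-/

theorem List.modifyHead_injective {α : Type*} {f : α → α} (hf : Function.Injective f) :
    Function.Injective (List.modifyHead f) := by
  rintro (_ | ⟨x, xs⟩) (_ | ⟨y, ys⟩) h <;> simp_all [hf.eq_iff]

section qbin

variable {A : Type*} [DecidableEq A]

theorem qbinAux_nil_right (u : List A) : qbinAux u [] = 1 := by
  cases u <;> rfl

theorem qbinAux_eq_zero_of_length_lt :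
    ∀ {u v : List A}, u.length < v.length → qbinAux u v = 0
  | [], _ :: _, _ => rfl
  | _ :: u, b :: v, h => by
    simp only [List.length_cons, Nat.add_lt_add_iff_right] at h
    rw [qbinAux, qbinAux_eq_zero_of_length_lt (by simpa using h.trans (Nat.lt_succ_self _)),
      qbinAux_eq_zero_of_length_lt h]
    simp

theorem qbinAux_append_singleton (a b : A) :
    ∀ w x : List A, qbinAux (w ++ [a]) (x ++ [b]) =
      qbinAux w (x ++ [b]) + if a = b then Polynomial.X ^ (w.length - x.length) * qbinAux w x else 0
  | [], [] => by simp [qbinAux]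
  | [], _ :: x => by
    rw [qbinAux_eq_zero_of_length_lt (by simp)]
    simp [qbinAux]
  | c :: w, [] => by
    simp only [List.cons_append, List.nil_append, qbinAux]
    rw [← List.nil_append [b], qbinAux_append_singleton a b w []]
    simp only [List.nil_append, qbinAux_nil_right, List.length_cons, List.length_nil,
      Nat.sub_zero]
    split_ifs <;> ring
  | c :: w, d :: x => by
    simp only [List.cons_append, qbinAux]
    rw [← List.cons_append, qbinAux_append_singleton a b w (d :: x),
      qbinAux_append_singleton a b w x]
    simp only [List.length_cons, List.length_append, List.length_nil,
      Nat.add_sub_add_right]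
    rcases lt_or_ge w.length (x.length + 1) with hwx | hxw
    · rw [qbinAux_eq_zero_of_length_lt (v := d :: x) (by simpa using hwx)]
      split_ifs <;> ring
    · -- `X ^ (|x| + 2) * X ^ (|w| - |x| - 1) = X ^ (|w| - |x|) * X ^ (|x| + 1)` needs `|x| < |w|`
      rw [show w.length - x.length = w.length - (x.length + 1) + 1 by omega]
      split_ifs <;> ring

theorem qbin_nil_right (u : List A) : qbin u [] = 1 :=
  qbinAux_nil_right _

theorem qbin_eq_zero_of_length_lt {u v : List A} (h : u.length < v.length) : qbin u v = 0 :=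
  qbinAux_eq_zero_of_length_lt (by simpa using h)

theorem qbin_cons_cons (a b : A) (u v : List A) :
    qbin (a :: u) (b :: v) =
      qbin u (b :: v) + if a = b then Polynomial.X ^ (u.length - v.length) * qbin u v else 0 := by
  simp only [qbin, List.reverse_cons, qbinAux_append_singleton, List.length_reverse]

end qbin

section glueWeight

variable {A : Type*}

theorem length_glue :
    ∀ (us : List (List A)) (v : List A), (glue us v).length = (us.map List.length).sum + v.length
  | [], _ => by simp [glue]
  | _ :: us, [] => by simp [glue, length_glue us]
  | _ :: us, _ :: v => by simp [glue, length_glue us v]; omega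

theorem length_eq_one_and_glue_nil_iff {us : List (List A)} {u : List A} :
    us.length = 1 ∧ glue us [] = u ↔ us = [u] := by
  constructor
  · rintro ⟨hlen, rfl⟩
    obtain ⟨w, rfl⟩ := List.length_eq_one_iff.mp hlen
    simp [glue]
  · rintro rfl
    simp [glue]

theorem length_eq_and_glue_cons_iff {us : List (List A)} {a b : A} {u v : List A} :
    us.length = (b :: v).length + 1 ∧ glue us (b :: v) = a :: u ↔
      (∃ ws, (ws.length = (b :: v).length + 1 ∧ glue ws (b :: v) = u) ∧
          ws.modifyHead (a :: ·) = us) ∨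
        a = b ∧ ∃ ws, (ws.length = v.length + 1 ∧ glue ws v = u) ∧ [] :: ws = us := by
  constructor
  · rintro ⟨hlen, hglue⟩
    obtain ⟨w, ws, rfl⟩ := List.exists_cons_of_length_eq_add_one hlen
    rcases w with _ | ⟨c, w⟩
    · simp only [glue, List.nil_append, List.cons.injEq] at hglue
      exact Or.inr ⟨hglue.1.symm, ws, ⟨by simpa using hlen, hglue.2⟩, rfl⟩
    · simp only [glue, List.cons_append, List.cons.injEq] at hglue
      obtain ⟨rfl, hglue⟩ := hglue
      exact Or.inl ⟨w :: ws, ⟨by simpa using hlen, hglue⟩, rfl⟩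
  · rintro (⟨ws, ⟨hlen, rfl⟩, rfl⟩ | ⟨rfl, ws, ⟨hlen, rfl⟩, rfl⟩)
    · obtain ⟨w, ws, rfl⟩ := List.exists_cons_of_length_eq_add_one hlen
      simpa [glue] using hlen
    · simpa [glue] using hlen

theorem sum_range_length_getD :
    ∀ l : List (List A),
      ∑ i ∈ Finset.range l.length, (l.getD i []).length = (l.map List.length).sum
  | [] => rfl
  | w :: l => by
    rw [List.length_cons, Finset.sum_range_succ', List.map_cons, List.sum_cons, add_comm]
    simp only [List.getD_cons_succ, List.getD_cons_zero, sum_range_length_getD l]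

theorem qweight_cons (w : List A) (ws : List (List A)) :
    qweight (w :: ws) = qweight ws + (ws.map List.length).sum := by
  simp only [qweight, List.length_cons, Finset.sum_range_succ', List.getD_cons_succ,
    zero_mul, add_zero, add_mul, one_mul, Finset.sum_add_distrib, sum_range_length_getD]

theorem qweight_modifyHead (f : List A → List A) (ws : List (List A)) :
    qweight (ws.modifyHead f) = qweight ws := by
  cases ws <;> simp [qweight_cons]

theorem qweight_nil_cons_of_glue_eq {ws : List (List A)} {u v : List A}
    (h : glue ws v = u) : qweight ([] :: ws) = u.length - v.length + qweight ws := by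
  rw [qweight_cons, ← h, length_glue]
  omega

end glueWeight

section factorizations

variable {A : Type*} [DecidableEq A]

def factorizations : List A → List A → Finset (List (List A))
  | u, [] => {[u]}
  | [], _ :: _ => ∅
  | a :: u, b :: v =>
      (factorizations u (b :: v)).image (List.modifyHead (a :: ·)) ∪
        if a = b then (factorizations u v).image ([] :: ·) else ∅

theorem mem_factorizations :
    ∀ {u v : List A} {us : List (List A)},
      us ∈ factorizations u v ↔ us.length = v.length + 1 ∧ glue us v = u
  | u, [], us => by
    rw [factorizations, Finset.mem_singleton, List.length_nil, zero_add,
      length_eq_one_and_glue_nil_iff]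
  | [], b :: v, us => by
    simp only [factorizations, Finset.notMem_empty, false_iff, not_and]
    intro _ hglue
    have hlen := length_glue us (b :: v)
    simp [hglue] at hlen
  | a :: u, b :: v, us => by
    rw [length_eq_and_glue_cons_iff, factorizations, Finset.mem_union, Finset.mem_image]
    split_ifs with hab <;> simp [mem_factorizations, hab]

theorem qbin_eq_sum_factorizations_finset :
    ∀ u v : List A,
      qbin u v = ∑ us ∈ factorizations u v, (Polynomial.X : Polynomial ℕ) ^ qweight us
  | u, [] => by simp [factorizations, qbin_nil_right, qweight]
  | [], b :: v => by simp [factorizations, qbin_eq_zero_of_length_lt]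
  | a :: u, b :: v => by
    have hdisj : Disjoint ((factorizations u (b :: v)).image (List.modifyHead (a :: ·)))
        (if a = b then (factorizations u v).image ([] :: ·) else ∅) := by
      split_ifs
      · simp only [Finset.disjoint_left, Finset.mem_image, not_exists, not_and]
        rintro _ ⟨_ | ⟨w, ws⟩, -, rfl⟩ ws' - h <;> simp at h
      · exact Finset.disjoint_empty_right _
    rw [qbin_cons_cons, factorizations, Finset.sum_union hdisj,
      Finset.sum_image (List.modifyHead_injective List.cons_injective).injOn,
      qbin_eq_sum_factorizations_finset u (b :: v), qbin_eq_sum_factorizations_finset u v]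
    simp only [qweight_modifyHead]
    split_ifs
    · rw [Finset.sum_image List.cons_injective.injOn, Finset.mul_sum]
      refine congrArg _ (Finset.sum_congr rfl fun ws hws => ?_)
      rw [qweight_nil_cons_of_glue_eq (mem_factorizations.mp hws).2, pow_add]
    · rfl

end factorizations

theorem qbin_eq_sum_factorizations_general (A : Type*) [DecidableEq A]
    (u v : List A) :
    qbin u v =
      ∑ᶠ us ∈ {us : List (List A) | us.length = v.length + 1 ∧ glue us v = u},
        (Polynomial.X : Polynomial ℕ) ^ qweight us := by
  have hset : {us : List (List A) | us.length = v.length + 1 ∧ glue us v = u} =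
      ↑(factorizations u v) := Set.ext fun _ => mem_factorizations.symm
  rw [hset, finsum_mem_coe_finset, qbin_eq_sum_factorizations_finset]

/-- `binom_q(u, a₁⋯a_k) = Σ q^{Σ_{i=1}^k i·|uᵢ|}`, the sum ranging over all
factorizations `u = u₀ a₁ u₁ a₂ ⋯ u_{k-1} a_k u_k`. -/
theorem qbin_eq_sum_factorizations (A : Type*) [Fintype A] [DecidableEq A]
    (u v : List A) :
    qbin u v =
      ∑ᶠ us ∈ {us : List (List A) | us.length = v.length + 1 ∧ glue us v = u},
        (Polynomial.X : Polynomial ℕ) ^ qweight us :=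
  qbin_eq_sum_factorizations_general A u v
end

section
/- Let k ≥ 1 and let u, w be words over A with |u| ≥ k and |w| ≥ k. If binom_q(u,x) = binom_q(w,x) for every word x ∈ A^k of length k, then u = w. -/
/-!
Read on reversed words, `qbinAux u x` sums `q ^ wt` over the occurrences of `x` as a subword of
`u`, where every letter of `u` skipped before `x` is exhausted costs the number of letters of `x`
still to be matched. Hence the constant coefficient detects whether `x` is a prefix of `u`, and the
coefficient of `q ^ j` only sees the first `|x| + j` letters of `u`. If `s` is a prefix of `u` with
`|s| ≥ k - 1` and `x = s.take (k - 1) ++ [a]`, the only new occurrence of weight `|s| + 1 - k` in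
`u.take (|s| + 1)` matches `s.take (k - 1)` at the start and `a` at position `|s|`; so comparing
that coefficient for `u` and `w` reveals whether `u[|s|] = a`, and `u` is read off letter by letter.
-/

namespace QBinomial

open Polynomial

variable {A : Type*} [DecidableEq A]

@[simp]
lemma qbinAux_nil_right (u : List A) : qbinAux u [] = 1 := by
  cases u <;> rfl

@[simp]
lemma qbinAux_nil_cons (b : A) (v : List A) : qbinAux [] (b :: v) = 0 := rfl

@[simp]
lemma qbinAux_cons_cons (a b : A) (u v : List A) :
    qbinAux (a :: u) (b :: v) =
      X ^ (v.length + 1) * qbinAux u (b :: v) + (if a = b then qbinAux u v else 0) := rfl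

lemma coeff_zero_qbinAux (u v : List A) :
    (qbinAux u v).coeff 0 = if v <+: u then 1 else 0 := by
  induction u generalizing v with
  | nil => cases v <;> simp
  | cons a u ih =>
    cases v with
    | nil => simp
    | cons b v =>
      simp only [qbinAux_cons_cons, coeff_add, coeff_X_pow_mul', List.cons_prefix_cons]
      split_ifs <;> simp_all

lemma coeff_qbinAux_take {u v : List A} {j n : ℕ} (h : v.length + j ≤ n) :
    (qbinAux (u.take n) v).coeff j = (qbinAux u v).coeff j := by
  induction u generalizing v j n with
  | nil => simp
  | cons a u ih =>
    cases v with
    | nil => simp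
    | cons b v =>
      obtain ⟨n, rfl⟩ : ∃ n', n = n' + 1 := ⟨n - 1, by simp at h; omega⟩
      simp only [List.take_succ_cons, qbinAux_cons_cons, coeff_add, coeff_X_pow_mul',
        apply_ite (coeff · j), coeff_zero]
      simp only [List.length_cons] at h
      congr 1 <;> split_ifs
      · exact ih (by simp; omega)
      · rfl
      · exact ih (by omega)
      · rfl

lemma coeff_qbinAux_append {u v : List A} (t : List A) {j : ℕ} (h : v.length + j ≤ u.length) :
    (qbinAux (u ++ t) v).coeff j = (qbinAux u v).coeff j := by
  rw [← coeff_qbinAux_take h, List.take_append_of_le_length le_rfl, List.take_length]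

lemma coeff_qbinAux_append_singleton_singleton (s : List A) (a c : A) :
    (qbinAux (s ++ [c]) [a]).coeff s.length =
      (qbinAux s [a]).coeff s.length + if c = a then 1 else 0 := by
  induction s with
  | nil => split_ifs <;> simp [*]
  | cons d s ih =>
    simp only [List.cons_append, qbinAux_cons_cons, List.length_nil, zero_add, pow_one,
      qbinAux_nil_right, List.length_cons, coeff_add, coeff_X_mul, ih]
    split_ifs <;> omega

lemma coeff_qbinAux_append_singleton {p s : List A} (hp : p <+: s) (a c : A) :
    (qbinAux (s ++ [c]) (p ++ [a])).coeff (s.length - p.length) =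
      (qbinAux s (p ++ [a])).coeff (s.length - p.length) + if c = a then 1 else 0 := by
  induction p generalizing s with
  | nil => simpa using coeff_qbinAux_append_singleton_singleton s a c
  | cons d p ih =>
    obtain ⟨s, rfl, hps⟩ : ∃ s', s = d :: s' ∧ p <+: s' := by
      cases s with
      | nil => simp at hp
      | cons e s => exact ⟨s, by simp_all [List.cons_prefix_cons]⟩
    have hlen := hps.length_le
    simp only [List.cons_append, qbinAux_cons_cons, ite_true, coeff_add, coeff_X_pow_mul',
      List.length_cons, List.length_append, Nat.add_sub_add_right]
    rw [ih hps, ← add_assoc]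
    congr 2
    split_ifs
    · exact coeff_qbinAux_append _ (by simp; omega)
    · rfl

lemma coeff_qbinAux_of_prefix {s u : List A} (hs : s <+: u) {k : ℕ} (hk : 1 ≤ k)
    (hsk : k ≤ s.length + 1) (a : A) :
    (qbinAux u (s.take (k - 1) ++ [a])).coeff (s.length + 1 - k) =
      (qbinAux s (s.take (k - 1) ++ [a])).coeff (s.length + 1 - k) +
        if u[s.length]? = some a then 1 else 0 := by
  have hp : s.take (k - 1) <+: s := List.take_prefix _ _
  have hidx : s.length + 1 - k = s.length - (s.take (k - 1)).length := by simp; omega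
  have hu : u.take (s.length + 1) = s ++ u[s.length]?.toList := by
    rw [List.take_add_one, ← List.prefix_iff_eq_take.mp hs]
  rw [← coeff_qbinAux_take (n := s.length + 1) (by simp; omega), hu, hidx]
  cases u[s.length]? with
  | none => simp
  | some c => simpa using coeff_qbinAux_append_singleton hp a c

section Reconstruction

variable {k : ℕ} {u w : List A} (h : ∀ x : List A, x.length = k → qbinAux u x = qbinAux w x)
include h

lemma take_prefix_of_qbinAux_eq (hu : k ≤ u.length) : u.take k <+: w := by
  have h0 := coeff_zero_qbinAux w (u.take k)
  rw [← h _ (by simpa using hu), coeff_zero_qbinAux, if_pos (List.take_prefix k u)] at h0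
  split_ifs at h0 with hw
  exact hw

lemma getElem?_eq_of_qbinAux_eq (hk : 1 ≤ k) {s : List A} (hsu : s <+: u) (hsw : s <+: w)
    (hsk : k ≤ s.length + 1) : u[s.length]? = w[s.length]? := by
  have hx : ∀ a : A, (s.take (k - 1) ++ [a]).length = k := fun a => by simp; omega
  have hcount : ∀ a : A, u[s.length]? = some a ↔ w[s.length]? = some a := fun a => by
    have := congrArg (coeff · (s.length + 1 - k)) (h _ (hx a))
    simp only [coeff_qbinAux_of_prefix hsu hk hsk, coeff_qbinAux_of_prefix hsw hk hsk] at this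
    split_ifs at this <;> simp_all
  cases hu : u[s.length]? with
  | none => cases hw : w[s.length]? <;> simp_all
  | some a => exact ((hcount a).mp hu).symm

lemma prefix_of_qbinAux_eq (hk : 1 ≤ k) (hu : k ≤ u.length) : u <+: w := by
  suffices ∀ n ≤ u.length, u.take n <+: w by simpa using this u.length le_rfl
  intro n hn
  induction n with
  | zero => simp
  | succ n ih =>
    by_cases hnk : n + 1 ≤ k
    · exact (List.take_prefix_take_left hnk).trans (take_prefix_of_qbinAux_eq h hu)
    have hs := ih (by omega)
    have hslen : (u.take n).length = n := by simp; omega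
    have hnext := getElem?_eq_of_qbinAux_eq h hk (List.take_prefix n u) hs (by omega)
    rw [hslen] at hnext
    rw [List.take_add_one, hnext, List.prefix_iff_eq_take.mp hs, hslen, ← List.take_add_one]
    exact List.take_prefix _ _

end Reconstruction

lemma eq_of_qbinAux_eq {k : ℕ} (hk : 1 ≤ k) {u w : List A} (hu : k ≤ u.length)
    (h : ∀ x : List A, x.length = k → qbinAux u x = qbinAux w x) : u = w := by
  have huw := prefix_of_qbinAux_eq h hk hu
  have hwu := prefix_of_qbinAux_eq (fun x hx => (h x hx).symm) hk (hu.trans huw.length_le)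
  exact huw.eq_of_length (huw.length_le.antisymm hwu.length_le)

end QBinomial

theorem qbin_reconstruction_general (A : Type*) [DecidableEq A]
    (k : ℕ) (hk : 1 ≤ k) (u w : List A) (hu : k ≤ u.length)
    (h : ∀ x : List A, x.length = k → qbin u x = qbin w x) :
    u = w := by
  refine List.reverse_injective (QBinomial.eq_of_qbinAux_eq hk (by simpa using hu) fun x hx => ?_)
  simpa [qbin] using h x.reverse (by simpa using hx)

/-- Reconstruction: a word `u` with `|u| ≥ k ≥ 1` is uniquely determined by the
polynomials `binom_q(u,x)` for `x ∈ A^k`. -/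
theorem qbin_reconstruction (A : Type*) [Fintype A] [DecidableEq A]
    (k : ℕ) (hk : 1 ≤ k) (u w : List A) (hu : k ≤ u.length) (hw : k ≤ w.length)
    (h : ∀ x : List A, x.length = k → qbin u x = qbin w x) :
    u = w :=
  qbin_reconstruction_general A k hk u w hu h
end

section
/- For every word u over A and every integer n ≥ 0: Σ_{v ∈ A^n} binom_q(u,v) = gauss(|u|, n), where the sum ranges over all words v of length n over A. Consequently, for all words u, v and every i ≥ 0, the coefficient of q^i in binom_q(u,v) is at most the coefficient of q^i in gauss(|u|, |v|). -/
/-- The Gaussian binomial coefficient `gauss(m,n) ∈ ℕ[q]`. -/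
noncomputable def gauss : ℕ → ℕ → Polynomial ℕ
  | _, 0 => 1
  | 0, _ + 1 => 0
  | m + 1, n + 1 => Polynomial.X ^ (n + 1) * gauss m (n + 1) + gauss m n

/-! Summed over all `v ∈ A^n`, the recursion of `qbinAux` (that of `binom_q` read on reversed
words) becomes the recursion of `gauss`: the terms `q^(|w|+1) · qbinAux u (b :: w)` add up to
`q^n` times the full sum for `u`, and the Kronecker delta keeps exactly the words `a :: w`, which
contribute the full sum for `u` in length `n - 1`. Reversal permutes `A^n`, so the same sum is
obtained for `qbin`. All coefficients in `ℕ[q]` are nonnegative, so each summand is coefficientwise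
bounded by the sum. -/

theorem List.ofFn_comp_rev {α : Type*} {n : ℕ} (v : Fin n → α) :
    List.ofFn (v ∘ Fin.rev) = (List.ofFn v).reverse := by
  refine List.ext_getElem (by simp) fun i h₁ _ => ?_
  simp only [List.getElem_ofFn, List.getElem_reverse, Function.comp_apply, List.length_ofFn]
  congr 1
  ext
  simp only [List.length_ofFn] at h₁
  simp only [Fin.val_rev]
  omega

section SumOverWords

variable {α M : Type*} [Fintype α] [AddCommMonoid M]

theorem Fintype.sum_ofFn_succ {n : ℕ} (f : List α → M) :
    ∑ v : Fin (n + 1) → α, f (List.ofFn v) = ∑ b : α, ∑ w : Fin n → α, f (b :: List.ofFn w) := by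
  rw [← (Fin.consEquiv fun _ => α).sum_comp, Fintype.sum_prod_type]
  simp [List.ofFn_succ]

theorem Fintype.sum_ofFn_reverse {n : ℕ} (f : List α → M) :
    ∑ v : Fin n → α, f (List.ofFn v).reverse = ∑ v : Fin n → α, f (List.ofFn v) := by
  simp only [← List.ofFn_comp_rev]
  exact Fintype.sum_equiv (Equiv.arrowCongr Fin.revPerm (Equiv.refl α)) _ _ fun v => rfl

end SumOverWords

section QBinomial

variable {A : Type*} [Fintype A] [DecidableEq A]

theorem sum_qbinAux_ofFn (u : List A) (n : ℕ) :
    ∑ v : Fin n → A, qbinAux u (List.ofFn v) = gauss u.length n := by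
  induction u generalizing n with
  | nil =>
    cases n with
    | zero => simp [qbinAux, gauss]
    | succ m => simp [List.ofFn_succ, qbinAux, gauss]
  | cons a u ih =>
    cases n with
    | zero => simp [qbinAux, gauss]
    | succ m =>
      have h_full := ih (m + 1)
      rw [Fintype.sum_ofFn_succ] at h_full ⊢
      have h_delta : ∑ b : A, ∑ w : Fin m → A,
          (if a = b then qbinAux u (List.ofFn w) else 0) = gauss u.length m := by
        rw [Finset.sum_comm]
        simp only [Finset.sum_ite_eq, Finset.mem_univ, if_true, ih]
      simp only [qbinAux, List.length_ofFn, Finset.sum_add_distrib, ← Finset.mul_sum, h_full,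
        h_delta]
      rfl

theorem sum_qbin_ofFn (u : List A) (n : ℕ) :
    ∑ v : Fin n → A, qbin u (List.ofFn v) = gauss u.length n := by
  unfold qbin
  rw [Fintype.sum_ofFn_reverse (qbinAux u.reverse), sum_qbinAux_ofFn, u.length_reverse]

theorem coeff_qbin_le_coeff_gauss (u v : List A) (i : ℕ) :
    (qbin u v).coeff i ≤ (gauss u.length v.length).coeff i := by
  rw [← sum_qbin_ofFn u v.length, Polynomial.finsetSum_coeff]
  conv_lhs => rw [← List.ofFn_get v]
  exact Finset.single_le_sum (f := fun w : Fin v.length → A => (qbin u (List.ofFn w)).coeff i)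
    (fun _ _ => Nat.zero_le _) (Finset.mem_univ v.get)

end QBinomial

/-- `Σ_{v ∈ A^n} binom_q(u,v) = gauss(|u|,n)` (words of length `n` being
parametrized by functions `Fin n → A`); consequently every coefficient of
`binom_q(u,v)` is at most the corresponding coefficient of `gauss(|u|,|v|)`. -/
theorem qbin_sum_over_subwords (A : Type*) [Fintype A] [DecidableEq A] :
    (∀ (u : List A) (n : ℕ),
      ∑ v : Fin n → A, qbin u (List.ofFn v) = gauss u.length n) ∧
    (∀ (u v : List A) (i : ℕ),
      (qbin u v).coeff i ≤ (gauss u.length v.length).coeff i) :=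
  ⟨sum_qbin_ofFn, coeff_qbin_le_coeff_gauss⟩
end

section
/- The q-shuffle product is associative: for all words u, v, w ∈ A*, (u ⧢_q v) ⧢_q w = u ⧢_q (v ⧢_q w), where the q-shuffle is extended bilinearly from words to noncommutative polynomials with coefficients in ℕ[q] (i.e., s ⧢_q t = Σ_{x,y ∈ A*} ⟨s,x⟩·⟨t,y⟩·(x ⧢_q y)). -/
noncomputable def qShuffleAux {A : Type*} [DecidableEq A] :
    List A → List A → (List A →₀ Polynomial ℕ)
  | [], v => Finsupp.single v 1
  | a :: u, [] => Finsupp.single (a :: u) 1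
  | a :: u, b :: v =>
      (Polynomial.X : Polynomial ℕ) ^ (v.length + 1) •
          Finsupp.mapDomain (a :: ·) (qShuffleAux u (b :: v)) +
        Finsupp.mapDomain (b :: ·) (qShuffleAux (a :: u) v)

/-- The `q`-shuffle `u ⧢_q v` of two words. -/
noncomputable def qShuffle {A : Type*} [DecidableEq A] (u v : List A) :
    List A →₀ Polynomial ℕ :=
  Finsupp.mapDomain List.reverse (qShuffleAux u.reverse v.reverse)

/-- The bilinear extension of the `q`-shuffle to noncommutative polynomials:
`s ⧢_q t = Σ_{x,y ∈ A*} ⟨s,x⟩·⟨t,y⟩·(x ⧢_q y)`. -/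
noncomputable def qShuffleExt {A : Type*} [DecidableEq A]
    (s t : List A →₀ Polynomial ℕ) : List A →₀ Polynomial ℕ :=
  s.sum fun x cx => t.sum fun y cy => (cx * cy) • qShuffle x y

namespace QShuffleAssoc

open Finsupp Polynomial

variable {A : Type*} [DecidableEq A]

lemma aux_nil_left (v : List A) : qShuffleAux ([] : List A) v = Finsupp.single v 1 := by
  simp [qShuffleAux]

lemma aux_nil_right (u : List A) : qShuffleAux u ([] : List A) = Finsupp.single u 1 := by
  cases u <;> simp [qShuffleAux]

lemma aux_cons_cons (a : A) (u : List A) (b : A) (v : List A) :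
    qShuffleAux (a :: u) (b :: v) =
      (Polynomial.X : Polynomial ℕ) ^ (v.length + 1) •
          Finsupp.mapDomain (a :: ·) (qShuffleAux u (b :: v)) +
        Finsupp.mapDomain (b :: ·) (qShuffleAux (a :: u) v) := by
  simp [qShuffleAux]

/-- Homogeneity: the support of `qShuffleAux u v` consists of words of length
`|u| + |v|`. -/
lemma aux_length : ∀ u v : List A, ∀ x ∈ (qShuffleAux u v).support,
    x.length = u.length + v.length := by
  intro u v
  induction u, v using qShuffleAux.induct with
  | case1 v =>
    intro x hx
    rw [aux_nil_left] at hx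
    have := Finsupp.support_single_subset hx
    simp at this
    simp [this]
  | case2 a u =>
    intro x hx
    rw [aux_nil_right] at hx
    have := Finsupp.support_single_subset hx
    simp at this
    simp [this]
  | case3 a u b v ih1 ih2 =>
    intro x hx
    rw [aux_cons_cons] at hx
    classical
    have hx' := Finsupp.support_add hx
    rcases Finset.mem_union.1 hx' with h | h
    · have h2 := Finsupp.support_smul h
      have h3 := Finsupp.mapDomain_support h2
      rcases Finset.mem_image.1 h3 with ⟨y, hy, rfl⟩
      have := ih1 y hy
      simp [this]; omega
    · have h3 := Finsupp.mapDomain_support h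
      rcases Finset.mem_image.1 h3 with ⟨y, hy, rfl⟩
      have := ih2 y hy
      simp [this]; omega

/-- `H s w = Σ_x ⟨s,x⟩ • (x ⧢ w)` (in reversed coordinates). -/
noncomputable def H (s : List A →₀ Polynomial ℕ) (w : List A) : List A →₀ Polynomial ℕ :=
  s.sum fun x cx => cx • qShuffleAux x w

/-- `G u t = Σ_y ⟨t,y⟩ • (u ⧢ y)` (in reversed coordinates). -/
noncomputable def G (u : List A) (t : List A →₀ Polynomial ℕ) : List A →₀ Polynomial ℕ :=
  t.sum fun y cy => cy • qShuffleAux u y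

lemma H_single (x : List A) (c : Polynomial ℕ) (w : List A) :
    H (Finsupp.single x c) w = c • qShuffleAux x w :=
  Finsupp.sum_single_index (zero_smul _ _)

lemma G_single (u : List A) (y : List A) (c : Polynomial ℕ) :
    G u (Finsupp.single y c) = c • qShuffleAux u y :=
  Finsupp.sum_single_index (zero_smul _ _)

lemma H_add (s t : List A →₀ Polynomial ℕ) (w : List A) :
    H (s + t) w = H s w + H t w :=
  Finsupp.sum_add_index' (fun _ => zero_smul _ _) (fun _ b₁ b₂ => add_smul b₁ b₂ _)

lemma G_add (u : List A) (s t : List A →₀ Polynomial ℕ) :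
    G u (s + t) = G u s + G u t :=
  Finsupp.sum_add_index' (fun _ => zero_smul _ _) (fun _ b₁ b₂ => add_smul b₁ b₂ _)

lemma H_smul (c : Polynomial ℕ) (s : List A →₀ Polynomial ℕ) (w : List A) :
    H (c • s) w = c • H s w := by
  unfold H
  rw [Finsupp.sum_smul_index' (g := s) (b := c)
      (h := fun x cx => cx • qShuffleAux x w) (fun _ => zero_smul _ _),
    Finsupp.smul_sum]
  exact Finsupp.sum_congr fun x _ => by rw [smul_eq_mul, mul_smul]

lemma G_smul (u : List A) (c : Polynomial ℕ) (t : List A →₀ Polynomial ℕ) :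
    G u (c • t) = c • G u t := by
  unfold G
  rw [Finsupp.sum_smul_index' (g := t) (b := c)
      (h := fun y cy => cy • qShuffleAux u y) (fun _ => zero_smul _ _),
    Finsupp.smul_sum]
  exact Finsupp.sum_congr fun x _ => by rw [smul_eq_mul, mul_smul]

lemma H_nil (s : List A →₀ Polynomial ℕ) : H s ([] : List A) = s := by
  unfold H
  rw [show (fun (x : List A) (cx : Polynomial ℕ) => cx • qShuffleAux x ([] : List A)) =
      fun x cx => Finsupp.single x cx by
    funext x cx; rw [aux_nil_right, Finsupp.smul_single, smul_eq_mul, mul_one]]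
  exact Finsupp.sum_single s

lemma G_nil (t : List A →₀ Polynomial ℕ) : G ([] : List A) t = t := by
  unfold G
  rw [show (fun (y : List A) (cy : Polynomial ℕ) => cy • qShuffleAux ([] : List A) y) =
      fun y cy => Finsupp.single y cy by
    funext y cy; rw [aux_nil_left, Finsupp.smul_single, smul_eq_mul, mul_one]]
  exact Finsupp.sum_single t

lemma H_mapDomain (a : A) (s : List A →₀ Polynomial ℕ) (c : A) (w : List A) :
    H (Finsupp.mapDomain (a :: ·) s) (c :: w) =
      (Polynomial.X : Polynomial ℕ) ^ (w.length + 1) •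
          Finsupp.mapDomain (a :: ·) (H s (c :: w)) +
        Finsupp.mapDomain (c :: ·) (H (Finsupp.mapDomain (a :: ·) s) w) := by
  unfold H
  rw [Finsupp.sum_mapDomain_index (f := (a :: ·)) (s := s)
      (h := fun x cx => cx • qShuffleAux x (c :: w))
      (fun _ => zero_smul _ _) (fun _ b₁ b₂ => add_smul b₁ b₂ _),
    Finsupp.sum_mapDomain_index (f := (a :: ·)) (s := s)
      (h := fun x cx => cx • qShuffleAux x w)
      (fun _ => zero_smul _ _) (fun _ b₁ b₂ => add_smul b₁ b₂ _)]
  have h1 : (s.sum fun x m => m • qShuffleAux (a :: x) (c :: w)) =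
      s.sum fun x m =>
        (Polynomial.X : Polynomial ℕ) ^ (w.length + 1) •
            (m • Finsupp.mapDomain (a :: ·) (qShuffleAux x (c :: w))) +
          m • Finsupp.mapDomain (c :: ·) (qShuffleAux (a :: x) w) :=
    Finsupp.sum_congr fun x _ => by rw [aux_cons_cons, smul_add, smul_comm]
  rw [h1, Finsupp.sum_add]
  congr 1
  · rw [← Finsupp.smul_sum]
    congr 1
    rw [Finsupp.mapDomain_sum]
    exact Finsupp.sum_congr fun x _ => (Finsupp.mapDomain_smul _ _).symm
  · rw [Finsupp.mapDomain_sum]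
    exact Finsupp.sum_congr fun x _ => (Finsupp.mapDomain_smul _ _).symm

lemma G_mapDomain (a : A) (u : List A) (d : A) (t : List A →₀ Polynomial ℕ) (L : ℕ)
    (hL : ∀ y ∈ t.support, y.length = L) :
    G (a :: u) (Finsupp.mapDomain (d :: ·) t) =
      (Polynomial.X : Polynomial ℕ) ^ (L + 1) •
          Finsupp.mapDomain (a :: ·) (G u (Finsupp.mapDomain (d :: ·) t)) +
        Finsupp.mapDomain (d :: ·) (G (a :: u) t) := by
  unfold G
  rw [Finsupp.sum_mapDomain_index (f := (d :: ·)) (s := t)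
      (h := fun y cy => cy • qShuffleAux (a :: u) y)
      (fun _ => zero_smul _ _) (fun _ b₁ b₂ => add_smul b₁ b₂ _),
    Finsupp.sum_mapDomain_index (f := (d :: ·)) (s := t)
      (h := fun y cy => cy • qShuffleAux u y)
      (fun _ => zero_smul _ _) (fun _ b₁ b₂ => add_smul b₁ b₂ _)]
  have h1 : (t.sum fun y m => m • qShuffleAux (a :: u) (d :: y)) =
      t.sum fun y m =>
        (Polynomial.X : Polynomial ℕ) ^ (L + 1) •
            (m • Finsupp.mapDomain (a :: ·) (qShuffleAux u (d :: y))) +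
          m • Finsupp.mapDomain (d :: ·) (qShuffleAux (a :: u) y) :=
    Finsupp.sum_congr fun y hy => by
      rw [aux_cons_cons, hL y hy, smul_add, smul_comm]
  rw [h1, Finsupp.sum_add]
  congr 1
  · rw [← Finsupp.smul_sum]
    congr 1
    rw [Finsupp.mapDomain_sum]
    exact Finsupp.sum_congr fun x _ => (Finsupp.mapDomain_smul _ _).symm
  · rw [Finsupp.mapDomain_sum]
    exact Finsupp.sum_congr fun x _ => (Finsupp.mapDomain_smul _ _).symm

lemma aux_assoc : ∀ u v w : List A, H (qShuffleAux u v) w = G u (qShuffleAux v w)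
  | [], v, w => by
    rw [aux_nil_left, H_single, one_smul, G_nil]
  | a :: u, [], w => by
    rw [aux_nil_right, H_single, one_smul, aux_nil_left, G_single, one_smul]
  | a :: u, b :: v, [] => by
    rw [H_nil, aux_nil_right, G_single, one_smul]
  | a :: u, b :: v, c :: w => by
    have ih1 := aux_assoc u (b :: v) (c :: w)
    have ih2 := aux_assoc (a :: u) v (c :: w)
    have ih3 := aux_assoc (a :: u) (b :: v) w
    rw [aux_cons_cons a u b v, H_add, H_smul, H_mapDomain, H_mapDomain, ih1, ih2,
      aux_cons_cons b v c w]
    simp only [G_add, G_smul, Finsupp.mapDomain_add, Finsupp.mapDomain_smul]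
    rw [G_mapDomain a u b (qShuffleAux v (c :: w)) (v.length + (w.length + 1))
        (aux_length v (c :: w)),
      G_mapDomain a u c (qShuffleAux (b :: v) w) (v.length + 1 + w.length)
        (aux_length (b :: v) w)]
    have hC : Finsupp.mapDomain (c :: ·) (G (a :: u) (qShuffleAux (b :: v) w)) =
        (Polynomial.X : Polynomial ℕ) ^ (v.length + 1) •
            Finsupp.mapDomain (c :: ·)
              (H (Finsupp.mapDomain (a :: ·) (qShuffleAux u (b :: v))) w) +
          Finsupp.mapDomain (c :: ·)
            (H (Finsupp.mapDomain (b :: ·) (qShuffleAux (a :: u) v)) w) := by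
      rw [← ih3, aux_cons_cons a u b v, H_add, H_smul, Finsupp.mapDomain_add,
        Finsupp.mapDomain_smul]
    rw [hC]
    module
  termination_by u v w => u.length + v.length + w.length

end QShuffleAssoc

namespace QShuffleAssoc

variable {A : Type*} [DecidableEq A]

lemma ext_mapRev_single (t : List A →₀ Polynomial ℕ) (w : List A) :
    qShuffleExt (Finsupp.mapDomain List.reverse t) (Finsupp.single w (1 : Polynomial ℕ)) =
      Finsupp.mapDomain List.reverse (H t w.reverse) := by
  unfold qShuffleExt
  rw [Finsupp.sum_mapDomain_index (f := List.reverse) (s := t)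
      (h := fun x cx => (Finsupp.single w (1 : Polynomial ℕ)).sum
        fun y cy => (cx * cy) • qShuffle x y)
      (fun x => by simp [Finsupp.sum_single_index])
      (fun x m₁ m₂ => by
        beta_reduce
        rw [Finsupp.sum_single_index (by rw [mul_zero, zero_smul]),
          Finsupp.sum_single_index (by rw [mul_zero, zero_smul]),
          Finsupp.sum_single_index (by rw [mul_zero, zero_smul]),
          add_mul, add_smul])]
  unfold H
  rw [Finsupp.mapDomain_sum]
  refine Finsupp.sum_congr fun x _ => ?_
  rw [Finsupp.sum_single_index (by rw [mul_zero, zero_smul]), mul_one,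
    Finsupp.mapDomain_smul]
  unfold qShuffle
  rw [List.reverse_reverse]

lemma ext_single_mapRev (u : List A) (t : List A →₀ Polynomial ℕ) :
    qShuffleExt (Finsupp.single u (1 : Polynomial ℕ)) (Finsupp.mapDomain List.reverse t) =
      Finsupp.mapDomain List.reverse (G u.reverse t) := by
  unfold qShuffleExt
  rw [Finsupp.sum_single_index (by simp)]
  rw [Finsupp.sum_mapDomain_index (f := List.reverse) (s := t)
      (h := fun y cy => ((1 : Polynomial ℕ) * cy) • qShuffle u y)
      (fun y => by simp)
      (fun y m₁ m₂ => by beta_reduce; rw [mul_add, add_smul])]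
  unfold G
  rw [Finsupp.mapDomain_sum]
  refine Finsupp.sum_congr fun y _ => ?_
  rw [one_mul, Finsupp.mapDomain_smul]
  unfold qShuffle
  rw [List.reverse_reverse]

end QShuffleAssoc

/-- Associativity of the `q`-shuffle product:
`(u ⧢_q v) ⧢_q w = u ⧢_q (v ⧢_q w)` for all words `u, v, w`, the shuffle
being extended bilinearly (a word being identified with the polynomial `1·w`). -/
theorem qShuffle_assoc (A : Type*) [Fintype A] [DecidableEq A] (u v w : List A) :
    qShuffleExt (qShuffle u v) (Finsupp.single w (1 : Polynomial ℕ)) =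
      qShuffleExt (Finsupp.single u (1 : Polynomial ℕ)) (qShuffle v w) := by
  rw [show qShuffle u v = Finsupp.mapDomain List.reverse
      (qShuffleAux u.reverse v.reverse) from rfl,
    show qShuffle v w = Finsupp.mapDomain List.reverse
      (qShuffleAux v.reverse w.reverse) from rfl,
    QShuffleAssoc.ext_mapRev_single, QShuffleAssoc.ext_single_mapRev,
    QShuffleAssoc.aux_assoc]
end

section
/- (Reciprocal relation for the q-shuffle.) For all words u, v, w ∈ A* with |w| = |u| + |v|, the coefficient polynomial ⟨u ⧢_q v, w⟩ has degree at most |u|·|v| and satisfies ⟨u ⧢_q v, w⟩ = reflect_{|u|·|v|}(⟨v ⧢_q u, w⟩), where for a polynomial P of degree at most N, reflect_N(P) denotes the polynomial q^N·P(1/q), i.e., the polynomial whose coefficient of q^i is the coefficient of q^{N−i} in P. -/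
/-! Both sides obey the same recursion. On reversed words, the coefficient of `c :: w` in
`(a :: u) ⧢_q (b :: v)` is `[a = c] q^(|v|+1) ⟨u ⧢_q (b :: v), w⟩ + [b = c] ⟨(a :: u) ⧢_q v, w⟩`.
Since `(|u|+1)(|v|+1) = (|u|+1) + (|u|+1)|v| = (|v|+1) + |u|(|v|+1)`, reflecting the same recursion
for `(b :: v) ⧢_q (a :: u)` in degree `(|u|+1)(|v|+1)` exchanges its two summands with these,
and induction on `|u| + |v|` gives the degree bound and the reciprocity together. -/

namespace Polynomial

variable {R : Type*} [Semiring R]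

theorem reflect_zero_left (p : R[X]) : reflect 0 p = p := by
  ext i
  rw [coeff_reflect]
  rcases i with _ | i
  · rfl
  · rw [revAt_eq_self_of_lt i.succ_pos]

theorem reflect_add_X_pow_mul {p : R[X]} {n : ℕ} (hp : p.natDegree ≤ n) (m : ℕ) :
    reflect (m + n) (X ^ m * p) = reflect n p := by
  rw [reflect_mul _ _ (natDegree_X_pow_le m) hp, reflect_monomial, revAt_le le_rfl,
    Nat.sub_self, pow_zero, one_mul]

theorem reflect_add_of_natDegree_le {p : R[X]} {n : ℕ} (hp : p.natDegree ≤ n) (m : ℕ) :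
    reflect (m + n) p = X ^ m * reflect n p := by
  simpa [reflect_one] using reflect_mul 1 p (natDegree_one.trans_le m.zero_le) hp

end Polynomial

namespace Finsupp

variable {A M : Type*} [AddCommMonoid M]

theorem mapDomain_cons_apply_nil (a : A) (s : List A →₀ M) :
    mapDomain (a :: ·) s [] = 0 :=
  mapDomain_of_notMem_range _ _ (by simp)

theorem mapDomain_cons_apply_cons [DecidableEq A] (a c : A) (s : List A →₀ M) (w : List A) :
    mapDomain (a :: ·) s (c :: w) = if a = c then s w else 0 := by
  split_ifs with hac
  · subst hac
    exact mapDomain_apply List.cons_injective s w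
  · exact mapDomain_of_notMem_range _ _ (by simpa using hac)

end Finsupp

open Polynomial Finsupp

section

variable {A : Type*} [DecidableEq A]

theorem qShuffleAux_nil_left (v : List A) : qShuffleAux [] v = single v 1 := by
  rw [qShuffleAux]

theorem qShuffleAux_nil_right (v : List A) : qShuffleAux v [] = single v 1 := by
  cases v <;> rw [qShuffleAux]

theorem qShuffleAux_cons_cons_apply_nil (a b : A) (u v : List A) :
    qShuffleAux (a :: u) (b :: v) [] = 0 := by
  simp [qShuffleAux, mapDomain_cons_apply_nil]

theorem qShuffleAux_cons_cons_apply_cons (a b c : A) (u v w : List A) :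
    qShuffleAux (a :: u) (b :: v) (c :: w) =
      (if a = c then X ^ (v.length + 1) * qShuffleAux u (b :: v) w else 0) +
        if b = c then qShuffleAux (a :: u) v w else 0 := by
  simp only [qShuffleAux, Finsupp.add_apply, Finsupp.smul_apply, smul_eq_mul,
    mapDomain_cons_apply_cons, mul_ite, mul_zero]

theorem natDegree_qShuffleAux_apply_le (u v w : List A) :
    (qShuffleAux u v w).natDegree ≤ u.length * v.length := by
  induction u, v using qShuffleAux.induct generalizing w with
  | case1 v => simp [qShuffleAux_nil_left, single_apply, apply_ite natDegree]
  | case2 a u => simp [qShuffleAux_nil_right, single_apply, apply_ite natDegree]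
  | case3 a u b v ih₁ ih₂ =>
    rcases w with _ | ⟨c, w⟩
    · simp [qShuffleAux_cons_cons_apply_nil]
    rw [qShuffleAux_cons_cons_apply_cons]
    refine (natDegree_add_le _ _).trans (max_le ?_ ?_) <;> split_ifs
    · calc _ ≤ (v.length + 1) + u.length * (v.length + 1) :=
            natDegree_mul_le.trans (add_le_add (natDegree_X_pow_le _) (ih₁ w))
        _ = (u.length + 1) * (v.length + 1) := by ring
    · simp
    · exact (ih₂ w).trans (Nat.mul_le_mul_left _ v.length.le_succ)
    · simp

theorem qShuffleAux_apply_eq_reflect (u v w : List A) :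
    qShuffleAux u v w = reflect (u.length * v.length) (qShuffleAux v u w) := by
  induction u, v using qShuffleAux.induct generalizing w with
  | case1 v => simp [qShuffleAux_nil_left, qShuffleAux_nil_right, reflect_zero_left]
  | case2 a u => simp [qShuffleAux_nil_left, qShuffleAux_nil_right, reflect_zero_left]
  | case3 a u b v ih₁ ih₂ =>
    rcases w with _ | ⟨c, w⟩
    · simp [qShuffleAux_cons_cons_apply_nil]
    have h₁ : reflect ((u.length + 1) * (v.length + 1))
        (X ^ (u.length + 1) * qShuffleAux v (a :: u) w) = qShuffleAux (a :: u) v w := by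
      have hdeg : (qShuffleAux v (a :: u) w).natDegree ≤ (u.length + 1) * v.length :=
        (natDegree_qShuffleAux_apply_le _ _ _).trans_eq (Nat.mul_comm _ _)
      rw [show (u.length + 1) * (v.length + 1) = u.length + 1 + (u.length + 1) * v.length by
        ring, reflect_add_X_pow_mul hdeg]
      exact (ih₂ w).symm
    have h₂ : reflect ((u.length + 1) * (v.length + 1)) (qShuffleAux (b :: v) u w) =
        X ^ (v.length + 1) * qShuffleAux u (b :: v) w := by
      have hdeg : (qShuffleAux (b :: v) u w).natDegree ≤ u.length * (v.length + 1) :=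
        (natDegree_qShuffleAux_apply_le _ _ _).trans_eq (Nat.mul_comm _ _)
      rw [show (u.length + 1) * (v.length + 1) = v.length + 1 + u.length * (v.length + 1) by
        ring, reflect_add_of_natDegree_le hdeg, ih₁ w]
      rfl
    simp only [qShuffleAux_cons_cons_apply_cons, List.length_cons, reflect_add,
      apply_ite (reflect _), reflect_zero, h₁, h₂]
    exact add_comm _ _

theorem qShuffle_apply (u v w : List A) :
    qShuffle u v w = qShuffleAux u.reverse v.reverse w.reverse := by
  conv_lhs => rw [← List.reverse_reverse w]
  exact mapDomain_apply List.reverse_injective _ _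

end

theorem qShuffle_reciprocal_general (A : Type*) [DecidableEq A]
    (u v w : List A) :
    (qShuffle u v w).natDegree ≤ u.length * v.length ∧
    qShuffle u v w = Polynomial.reflect (u.length * v.length) (qShuffle v u w) := by
  rw [qShuffle_apply, qShuffle_apply]
  have hdeg := natDegree_qShuffleAux_apply_le u.reverse v.reverse w.reverse
  have hrefl := qShuffleAux_apply_eq_reflect u.reverse v.reverse w.reverse
  simp only [List.length_reverse] at hdeg hrefl
  exact ⟨hdeg, hrefl⟩

/-- The reciprocal relation for the `q`-shuffle: for `|w| = |u| + |v|`, the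
coefficient `⟨u ⧢_q v, w⟩` has degree at most `|u|·|v|` and equals the
reflection (reversal of coefficients up to degree `|u|·|v|`) of `⟨v ⧢_q u, w⟩`. -/
theorem qShuffle_reciprocal (A : Type*) [Fintype A] [DecidableEq A]
    (u v w : List A) (h : w.length = u.length + v.length) :
    (qShuffle u v w).natDegree ≤ u.length * v.length ∧
    qShuffle u v w = Polynomial.reflect (u.length * v.length) (qShuffle v u w) :=
  qShuffle_reciprocal_general A u v w
end

section
/- Let p be a prime, let M ∈ F_p[q] be a nonzero polynomial of degree at least 1, and let q̄ denote the image of q in the quotient ring K = F_p[q]/⟨M⟩. Then the index of q̄ in the multiplicative monoid of K equals val(M); that is, val(M) is the least integer i ≥ 0 for which there exists an integer k ≥ 1 with q̄^{i+k} = q̄^i. Here val(M) denotes the largest integer ℓ such that q^ℓ divides M. -/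
/-!
Write `M = X ^ ℓ * N` with `ℓ = val M` and `X ∤ N`. In `F[X] ⧸ (M)`, `X̄ ^ (i + k) = X̄ ^ i`
means `M ∣ X ^ i * (X ^ k - 1)`. Since `X ^ k - 1` has constant coefficient `-1`, this forces
`ℓ ≤ i`. Conversely `X` is a unit modulo `N`, hence of finite order `k` in the finite ring
`F[X] ⧸ (N)`, so `N ∣ X ^ k - 1` and `M ∣ X ^ ℓ * (X ^ k - 1)`.
-/

open Polynomial

namespace Polynomial

section Semiring

variable {R : Type*} [Semiring R] {M : R[X]}

theorem X_pow_dvd_iff_le_natTrailingDegree (hM : M ≠ 0) {n : ℕ} :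
    X ^ n ∣ M ↔ n ≤ M.natTrailingDegree := by
  rw [X_pow_dvd_iff]
  exact ⟨le_natTrailingDegree hM,
    fun h _ hd => coeff_eq_zero_of_lt_natTrailingDegree (hd.trans_le h)⟩

theorem isGreatest_X_pow_dvd_natTrailingDegree (hM : M ≠ 0) :
    IsGreatest {ℓ | (X : R[X]) ^ ℓ ∣ M} M.natTrailingDegree :=
  ⟨(X_pow_dvd_iff_le_natTrailingDegree hM).2 le_rfl,
    fun _ => (X_pow_dvd_iff_le_natTrailingDegree hM).1⟩

theorem exists_eq_X_pow_natTrailingDegree_mul_and_not_X_dvd (hM : M ≠ 0) :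
    ∃ N : R[X], M = X ^ M.natTrailingDegree * N ∧ ¬ X ∣ N := by
  obtain ⟨N, hMN⟩ := (isGreatest_X_pow_dvd_natTrailingDegree hM).1
  refine ⟨N, hMN, fun ⟨N', hN'⟩ => ?_⟩
  have hdvd : X ^ (M.natTrailingDegree + 1) ∣ M :=
    ⟨N', by rw [pow_succ, mul_assoc, ← hN', ← hMN]⟩
  exact ((X_pow_dvd_iff_le_natTrailingDegree hM).1 hdvd).not_gt (Nat.lt_succ_self _)

end Semiring

theorem le_of_X_pow_dvd_X_pow_mul_X_pow_sub_one {R : Type*} [Ring R] [Nontrivial R]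
    {ℓ i k : ℕ} (hk : k ≠ 0) (h : (X : R[X]) ^ ℓ ∣ X ^ i * (X ^ k - 1)) : ℓ ≤ i := by
  by_contra! hi
  have hcoeff := X_pow_dvd_iff.1 h i hi
  rw [coeff_X_pow_mul', if_pos le_rfl, Nat.sub_self, coeff_sub, coeff_X_pow, if_neg hk.symm,
    coeff_one_zero, zero_sub, neg_eq_zero] at hcoeff
  exact one_ne_zero hcoeff

theorem exists_dvd_X_pow_sub_one {K : Type*} [Field K] [Finite K] {N : K[X]} (hN : N ≠ 0)
    (hX : ¬ X ∣ N) : ∃ k, 0 < k ∧ N ∣ X ^ k - 1 := by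
  have : Module.Finite K (AdjoinRoot N) := .of_basis (AdjoinRoot.powerBasis hN).basis
  have : Finite (AdjoinRoot N) := Module.finite_of_finite K
  have hunit : IsUnit (AdjoinRoot.root N) := by
    simpa [isCoprime_zero_right] using
      (irreducible_X.coprime_iff_not_dvd.2 hX).map (AdjoinRoot.mk N)
  obtain ⟨k, hk, hpow⟩ := isOfFinOrder_iff_pow_eq_one.1 hunit.isOfFinOrder
  refine ⟨k, hk, ?_⟩
  rwa [← AdjoinRoot.mk_eq_zero, map_sub, map_pow, AdjoinRoot.mk_X, map_one, sub_eq_zero]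

end Polynomial

namespace AdjoinRoot

theorem root_pow_add_eq_root_pow_iff {R : Type*} [CommRing R] {f : R[X]} {i k : ℕ} :
    root f ^ (i + k) = root f ^ i ↔ f ∣ X ^ i * (X ^ k - 1) := by
  rw [← mk_X, ← map_pow, ← map_pow, mk_eq_mk, show (X : R[X]) ^ (i + k) - X ^ i =
    X ^ i * (X ^ k - 1) by ring]

theorem isLeast_root_pow_add_eq_root_pow {K : Type*} [Field K] [Finite K] {M : K[X]}
    (hM : M ≠ 0) :
    IsLeast {i | ∃ k, 1 ≤ k ∧ root M ^ (i + k) = root M ^ i} M.natTrailingDegree := by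
  obtain ⟨N, hMN, hXN⟩ := exists_eq_X_pow_natTrailingDegree_mul_and_not_X_dvd hM
  refine ⟨?_, fun i ⟨k, hk, hi⟩ => ?_⟩
  · obtain ⟨k, hk, hNk⟩ := exists_dvd_X_pow_sub_one (right_ne_zero_of_mul (hMN ▸ hM)) hXN
    exact ⟨k, hk,
      root_pow_add_eq_root_pow_iff.2 ((dvd_of_eq hMN).trans (mul_dvd_mul_left _ hNk))⟩
  · exact le_of_X_pow_dvd_X_pow_mul_X_pow_sub_one (by omega)
      ((isGreatest_X_pow_dvd_natTrailingDegree hM).1.trans (root_pow_add_eq_root_pow_iff.1 hi))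

end AdjoinRoot

theorem index_of_q_eq_valuation_general (p : ℕ) [Fact p.Prime]
    (M : Polynomial (ZMod p)) (hM : M ≠ 0) :
    IsGreatest {ℓ : ℕ | Polynomial.X ^ ℓ ∣ M} M.natTrailingDegree ∧
    IsLeast {i : ℕ | ∃ k : ℕ, 1 ≤ k ∧
        (Ideal.Quotient.mk (Ideal.span {M}) (Polynomial.X : Polynomial (ZMod p))) ^ (i + k) =
          (Ideal.Quotient.mk (Ideal.span {M}) (Polynomial.X : Polynomial (ZMod p))) ^ i}
      M.natTrailingDegree :=
  ⟨isGreatest_X_pow_dvd_natTrailingDegree hM, AdjoinRoot.isLeast_root_pow_add_eq_root_pow hM⟩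

/-- Let `M ∈ F_p[q]` be nonzero of degree at least 1 and let `q̄` be the image
of `q` in `K = F_p[q]/⟨M⟩`. Then `val(M)` — the largest `ℓ` with `q^ℓ ∣ M`,
here `M.natTrailingDegree`, as asserted by the first conjunct — is the least
`i ≥ 0` such that `q̄^{i+k} = q̄^i` for some `k ≥ 1`, i.e., it is the index of
`q̄` in the multiplicative monoid of `K`. -/
theorem index_of_q_eq_valuation (p : ℕ) [Fact p.Prime]
    (M : Polynomial (ZMod p)) (hM : M ≠ 0) (hdeg : 1 ≤ M.natDegree) :
    IsGreatest {ℓ : ℕ | Polynomial.X ^ ℓ ∣ M} M.natTrailingDegree ∧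
    IsLeast {i : ℕ | ∃ k : ℕ, 1 ≤ k ∧
        (Ideal.Quotient.mk (Ideal.span {M}) (Polynomial.X : Polynomial (ZMod p))) ^ (i + k) =
          (Ideal.Quotient.mk (Ideal.span {M}) (Polynomial.X : Polynomial (ZMod p))) ^ i}
      M.natTrailingDegree :=
  index_of_q_eq_valuation_general p M hM
end

section
/- Let p be a prime and let M ∈ F_p[q] be a nonzero polynomial of degree d ≥ 1, and let q̄ denote the image of q in K = F_p[q]/⟨M⟩. Then q̄ is a unit of K whose multiplicative order is a power of p if and only if M = a·(q−1)^d for some nonzero a ∈ F_p. -/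
open Polynomial

/-
By Frobenius, `X ^ p ^ n - 1 = (X - 1) ^ p ^ n` in `F_p[X]`, so `q̄` is a unit of `p`-power order
exactly when `M` divides some power of the prime `X - 1`, i.e. when `M` is a unit multiple of
`(X - 1) ^ d`.
-/

theorem isUnit_and_exists_orderOf_eq_pow_iff {G : Type*} [Monoid G] {p : ℕ} (hp : p.Prime)
    (x : G) : (IsUnit x ∧ ∃ t : ℕ, orderOf x = p ^ t) ↔ ∃ n : ℕ, x ^ p ^ n = 1 := by
  constructor
  · rintro ⟨-, t, ht⟩
    exact ⟨t, ht ▸ pow_orderOf_eq_one x⟩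
  · rintro ⟨n, hn⟩
    obtain ⟨t, -, ht⟩ := (Nat.dvd_prime_pow hp).mp (orderOf_dvd_of_pow_eq_one hn)
    exact ⟨IsUnit.of_pow_eq_one hn (pow_ne_zero n hp.ne_zero), t, ht⟩

theorem Ideal.Quotient.mk_span_singleton_pow_eq_one_iff {R : Type*} [CommRing R] (a x : R)
    (n : ℕ) : Ideal.Quotient.mk (Ideal.span {a}) x ^ n = 1 ↔ a ∣ x ^ n - 1 := by
  rw [← Ideal.mem_span_singleton, ← Ideal.Quotient.eq_zero_iff_mem, map_sub, map_one, map_pow,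
    sub_eq_zero]

theorem exists_dvd_pow_pow_iff {α : Type*} [Monoid α] {p : ℕ} (hp : 1 < p) (a b : α) :
    (∃ n : ℕ, a ∣ b ^ p ^ n) ↔ ∃ n : ℕ, a ∣ b ^ n :=
  ⟨fun ⟨n, h⟩ ↦ ⟨p ^ n, h⟩,
    fun ⟨n, h⟩ ↦ ⟨n, h.trans (pow_dvd_pow b (Nat.lt_pow_self hp).le)⟩⟩

theorem Polynomial.exists_dvd_X_sub_C_pow_iff {K : Type*} [Field K] (c : K) (M : K[X]) :
    (∃ n : ℕ, M ∣ (X - C c) ^ n) ↔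
      ∃ a : K, a ≠ 0 ∧ M = C a * (X - C c) ^ M.natDegree := by
  constructor
  · rintro ⟨n, hn⟩
    obtain ⟨i, -, hassoc⟩ := (dvd_prime_pow (irreducible_X_sub_C c).prime n).mp hn
    obtain ⟨u, hu⟩ := hassoc.symm
    obtain ⟨a, ha, hua⟩ := Polynomial.isUnit_iff.mp u.isUnit
    have hM : M = C a * (X - C c) ^ i := by rw [← hu, hua, mul_comm]
    have hdeg : M.natDegree = i := by
      rw [hM, natDegree_C_mul ha.ne_zero, natDegree_pow, natDegree_X_sub_C, mul_one]
    exact ⟨a, ha.ne_zero, hdeg ▸ hM⟩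
  · rintro ⟨a, ha, hM⟩
    refine ⟨M.natDegree, ?_⟩
    nth_rw 1 [hM]
    exact (isUnit_C.mpr ha.isUnit).mul_left_dvd.mpr dvd_rfl

theorem q_has_p_power_order_iff_general (p : ℕ) [Fact p.Prime]
    (M : Polynomial (ZMod p)) :
    (IsUnit (Ideal.Quotient.mk (Ideal.span {M}) (Polynomial.X : Polynomial (ZMod p))) ∧
      ∃ t : ℕ,
        orderOf (Ideal.Quotient.mk (Ideal.span {M}) (Polynomial.X : Polynomial (ZMod p))) =
          p ^ t) ↔
      ∃ a : ZMod p, a ≠ 0 ∧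
        M = Polynomial.C a * (Polynomial.X - 1) ^ M.natDegree := by
  have frobenius (n : ℕ) : (X - 1 : (ZMod p)[X]) ^ p ^ n = X ^ p ^ n - 1 := by
    rw [sub_pow_char_pow, one_pow]
  have hp : p.Prime := Fact.out
  simp only [isUnit_and_exists_orderOf_eq_pow_iff hp,
    Ideal.Quotient.mk_span_singleton_pow_eq_one_iff, ← frobenius,
    exists_dvd_pow_pow_iff hp.one_lt]
  simpa only [map_one] using exists_dvd_X_sub_C_pow_iff (1 : ZMod p) M

/-- Let `M ∈ F_p[q]` be nonzero of degree `d ≥ 1` and let `q̄` be the image of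
`q` in `K = F_p[q]/⟨M⟩`. Then `q̄` is a unit of `K` whose multiplicative order
is a power of `p` if and only if `M = a·(q-1)^d` for some nonzero `a ∈ F_p`. -/
theorem q_has_p_power_order_iff (p : ℕ) [Fact p.Prime]
    (M : Polynomial (ZMod p)) (hM : M ≠ 0) (hdeg : 1 ≤ M.natDegree) :
    (IsUnit (Ideal.Quotient.mk (Ideal.span {M}) (Polynomial.X : Polynomial (ZMod p))) ∧
      ∃ t : ℕ,
        orderOf (Ideal.Quotient.mk (Ideal.span {M}) (Polynomial.X : Polynomial (ZMod p))) =
          p ^ t) ↔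
      ∃ a : ZMod p, a ≠ 0 ∧
        M = Polynomial.C a * (Polynomial.X - 1) ^ M.natDegree :=
  q_has_p_power_order_iff_general p M
end
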